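/- Let k be a field of characteristic 0, V a finite-dimensional k-vector space, and ψ : X ⊗ X → k with X = V a bilinear form satisfying ψ ∘ τ = -ψ (alternating). For n ≥ 2, the Laplace operator Δ_{ψ,a}^n : ∧^n X → ∧^{n-2} X factors through the averaged sum: Δ_{ψ,a}^n ∘ p^n = p^{n-2} ∘ (2/(n(n-1))) ∑_{p<q} ε(δ_{p,q})⁻¹ (1_{X^{⊗(n-2)}} ⊗ ψ) ∘ δ_{p,q} as maps X^{⊗n} → ∧^{n-2} X, where p^m : X^{⊗m} → ∧^m X are the canonical projections, ε is the sign character, and δ_{p,q} ∈ S_n is any permutation with δ_{p,q}(p) = n-1, δ_{p,q}(q) = n. -/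

import Mathlib

open scoped TensorProduct
open PiTensorProduct

noncomputable section

variable (k : Type*) [Field k] (X : Type*) [AddCommGroup X] [Module k X]

/-- Split off the last tensor factor: `X^{⊗(n+1)} ≅ X^{⊗n} ⊗ X`. -/
def splitLast (n : ℕ) : (⨂[k]^(n+1) X) ≃ₗ[k] (⨂[k]^n X) ⊗[k] X :=
  ((PiTensorProduct.reindex k (fun _ : Fin (n+1) => X) finSumFinEquiv.symm).trans
      (PiTensorProduct.tmulEquiv (R := k) (M := X) (ι := Fin n) (ι₂ := Fin 1)).symm).trans
    (TensorProduct.congr (LinearEquiv.refl k _)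
      (PiTensorProduct.subsingletonEquiv (0 : Fin 1)))

/-- The action of a permutation `σ ∈ S_n` on the tensor power `X^{⊗n}`. -/
def permOp (n : ℕ) (σ : Equiv.Perm (Fin n)) : (⨂[k]^n X) ≃ₗ[k] ⨂[k]^n X :=
  PiTensorProduct.reindex k (fun _ : Fin n => X) σ

/-- The symmetrizing idempotent `e_s = (1/n!) ∑_{σ ∈ S_n} σ` on `X^{⊗n}`. -/
def symIdem (n : ℕ) : (⨂[k]^n X) →ₗ[k] ⨂[k]^n X :=
  ((Nat.factorial n : k))⁻¹ • ∑ σ : Equiv.Perm (Fin n), (permOp k X n σ).toLinearMap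

/-- The antisymmetrizing idempotent `e_a = (1/n!) ∑_{σ ∈ S_n} ε(σ) σ` on `X^{⊗n}`. -/
def altIdem (n : ℕ) : (⨂[k]^n X) →ₗ[k] ⨂[k]^n X :=
  ((Nat.factorial n : k))⁻¹ •
    ∑ σ : Equiv.Perm (Fin n), ((Equiv.Perm.sign σ : ℤ) : k) • (permOp k X n σ).toLinearMap

/-- The symmetric power `Sym^n X`, as the image of the symmetrizer in `X^{⊗n}`. -/
def SymPow (n : ℕ) : Submodule k (⨂[k]^n X) := LinearMap.range (symIdem k X n)

/-- The exterior power `∧^n X`, as the image of the antisymmetrizer in `X^{⊗n}`. -/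
def AltPow (n : ℕ) : Submodule k (⨂[k]^n X) := LinearMap.range (altIdem k X n)

/-- The canonical projection `p^n : X^{⊗n} → Sym^n X`. -/
def symProj (n : ℕ) : (⨂[k]^n X) →ₗ[k] ↥(SymPow k X n) := (symIdem k X n).rangeRestrict

/-- The canonical projection `p^n : X^{⊗n} → ∧^n X`. -/
def altProj (n : ℕ) : (⨂[k]^n X) →ₗ[k] ↥(AltPow k X n) := (altIdem k X n).rangeRestrict

variable {k X}
variable {Y Z W : Type*} [AddCommGroup Y] [Module k Y] [AddCommGroup Z] [Module k Z]
  [AddCommGroup W] [Module k W]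

/-- Apply `φ : X ⊗ Y → Z` to the last tensor factor and the auxiliary factor:
`X^{⊗(n+1)} ⊗ Y → X^{⊗n} ⊗ Z`. -/
def contractRaw (φ : X ⊗[k] Y →ₗ[k] Z) (n : ℕ) :
    ((⨂[k]^(n+1) X) ⊗[k] Y) →ₗ[k] (⨂[k]^n X) ⊗[k] Z :=
  (LinearMap.lTensor (⨂[k]^n X) φ) ∘ₗ
    (TensorProduct.assoc k (⨂[k]^n X) X Y).toLinearMap ∘ₗ
      (LinearMap.rTensor Y (splitLast k X n).toLinearMap)

/-- Contraction of the last two tensor factors with `ψ : X ⊗ X → W` :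
`X^{⊗(n+2)} → X^{⊗n} ⊗ W`. -/
def lapRaw (ψ : X ⊗[k] X →ₗ[k] W) (n : ℕ) :
    (⨂[k]^(n+2) X) →ₗ[k] (⨂[k]^n X) ⊗[k] W :=
  (contractRaw ψ n) ∘ₗ (splitLast k X (n+1)).toLinearMap

/-- The Laplace operator `Δ_{ψ,s}^{n+2} : Sym^{n+2} X → Sym^n X ⊗ W` attached to
`ψ : X ⊗ X → W`: the composite `Sym^{n+2} X → X^{⊗(n+2)} → X^{⊗n} ⊗ W → Sym^n X ⊗ W`. -/
def lapS (ψ : X ⊗[k] X →ₗ[k] W) (n : ℕ) :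
    ↥(SymPow k X (n+2)) →ₗ[k] (↥(SymPow k X n) ⊗[k] W) :=
  (LinearMap.rTensor W (symProj k X n)) ∘ₗ (lapRaw ψ n) ∘ₗ (SymPow k X (n+2)).subtype

/-- The Laplace operator `Δ_{ψ,a}^{n+2} : ∧^{n+2} X → ∧^n X ⊗ W` attached to
`ψ : X ⊗ X → W`. -/
def lapA (ψ : X ⊗[k] X →ₗ[k] W) (n : ℕ) :
    ↥(AltPow k X (n+2)) →ₗ[k] (↥(AltPow k X n) ⊗[k] W) :=
  (LinearMap.rTensor W (altProj k X n)) ∘ₗ (lapRaw ψ n) ∘ₗ (AltPow k X (n+2)).subtype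

section Aux
variable {k : Type*} [Field k] {X : Type*} [AddCommGroup X] [Module k X]
  {W : Type*} [AddCommGroup W] [Module k W]

theorem splitLast_tprod (m : ℕ) (f : Fin (m+1) → X) :
    splitLast k X m (tprod k f) =
      (⨂ₜ[k] i : Fin m, f i.castSucc) ⊗ₜ[k] f (Fin.last m) := by
  simp only [splitLast, LinearEquiv.trans_apply, PiTensorProduct.reindex_tprod,
    Equiv.symm_symm, PiTensorProduct.tmulEquiv_symm_apply, TensorProduct.congr_tmul,
    LinearEquiv.refl_apply, PiTensorProduct.subsingletonEquiv_apply_tprod,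
    finSumFinEquiv_apply_left, finSumFinEquiv_apply_right]
  rfl

theorem permOp_tprod (m : ℕ) (σ : Equiv.Perm (Fin m)) (f : Fin m → X) :
    permOp k X m σ (tprod k f) = tprod k (fun i => f (σ.symm i)) := by
  simp [permOp]

theorem lapRaw_tprod (ψ : X ⊗[k] X →ₗ[k] W) (m : ℕ) (f : Fin (m+2) → X) :
    lapRaw ψ m (tprod k f) =
      (⨂ₜ[k] i : Fin m, f i.castSucc.castSucc) ⊗ₜ[k]
        ψ (f (Fin.last m).castSucc ⊗ₜ[k] f (Fin.last (m+1))) := by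
  simp only [lapRaw, contractRaw, LinearMap.coe_comp, LinearEquiv.coe_coe, Function.comp_apply,
    splitLast_tprod, LinearMap.rTensor_tmul, TensorProduct.assoc_tmul, LinearMap.lTensor_tmul]

end Aux
section Aux2
variable {k : Type*} [Field k] {X : Type*} [AddCommGroup X] [Module k X]
  {W : Type*} [AddCommGroup W] [Module k W]

theorem tensorExt {m : ℕ} {E : Type*} [AddCommGroup E] [Module k E]
    {φ₁ φ₂ : (⨂[k]^m X) →ₗ[k] E} (h : ∀ f, φ₁ (tprod k f) = φ₂ (tprod k f)) : φ₁ = φ₂ :=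
  PiTensorProduct.ext (MultilinearMap.ext h)

theorem permOp_mul (m : ℕ) (σ τ : Equiv.Perm (Fin m)) :
    (permOp k X m (σ * τ)).toLinearMap
      = (permOp k X m σ).toLinearMap ∘ₗ (permOp k X m τ).toLinearMap := by
  apply tensorExt; intro f
  simp [permOp_tprod, Equiv.Perm.mul_def]

theorem comp_sum_distrib {M N P : Type*} [AddCommGroup M] [Module k M] [AddCommGroup N]
    [Module k N] [AddCommGroup P] [Module k P] {ι : Type*} (s : Finset ι)
    (g : N →ₗ[k] P) (f : ι → (M →ₗ[k] N)) :
    g ∘ₗ (∑ i ∈ s, f i) = ∑ i ∈ s, g ∘ₗ f i := by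
  apply LinearMap.ext; intro x
  simp [LinearMap.sum_apply]

theorem sum_comp_distrib {M N P : Type*} [AddCommGroup M] [Module k M] [AddCommGroup N]
    [Module k N] [AddCommGroup P] [Module k P] {ι : Type*} (s : Finset ι)
    (f : ι → (N →ₗ[k] P)) (g : M →ₗ[k] N) :
    (∑ i ∈ s, f i) ∘ₗ g = ∑ i ∈ s, f i ∘ₗ g := by
  apply LinearMap.ext; intro x
  simp [LinearMap.sum_apply]

theorem altIdem_comp_permOp (m : ℕ) (σ : Equiv.Perm (Fin m)) :
    altIdem k X m ∘ₗ (permOp k X m σ).toLinearMap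
      = ((Equiv.Perm.sign σ : ℤ) : k) • altIdem k X m := by
  unfold altIdem
  rw [LinearMap.smul_comp, sum_comp_distrib]
  rw [smul_comm]
  congr 1
  rw [Finset.smul_sum]
  refine (Fintype.sum_equiv (Equiv.mulRight σ) _ _ ?_)
  intro τ
  simp only [Equiv.coe_mulRight]
  rw [LinearMap.smul_comp, ← permOp_mul]
  rw [smul_smul]
  congr 1
  rcases Int.units_eq_one_or (Equiv.Perm.sign σ) with h | h <;>
    rcases Int.units_eq_one_or (Equiv.Perm.sign τ) with h2 | h2 <;>
      simp [Equiv.Perm.sign_mul, h, h2]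

theorem altProj_comp_permOp (m : ℕ) (σ : Equiv.Perm (Fin m)) :
    altProj k X m ∘ₗ (permOp k X m σ).toLinearMap
      = ((Equiv.Perm.sign σ : ℤ) : k) • altProj k X m := by
  apply LinearMap.ext; intro x
  apply Subtype.ext
  have h1 := LinearMap.congr_fun (altIdem_comp_permOp (k := k) (X := X) m σ) x
  simp only [LinearMap.coe_comp, Function.comp_apply, LinearMap.smul_apply] at h1 ⊢
  simp only [altProj, LinearMap.rangeRestrict, SetLike.val_smul, LinearMap.codRestrict_apply]
  exact h1

end Aux2
section Aux3

/-- The first of the two last slots of `Fin (m+2)`. -/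
def aC (m : ℕ) : Fin (m+2) := (Fin.last m).castSucc
/-- The last slot of `Fin (m+2)`. -/
def bC (m : ℕ) : Fin (m+2) := Fin.last (m+1)

theorem aC_val (m : ℕ) : (aC m : ℕ) = m := rfl
theorem bC_val (m : ℕ) : (bC m : ℕ) = m + 1 := rfl
theorem aC_ne_bC (m : ℕ) : aC m ≠ bC m := by
  intro h; have := congrArg Fin.val h; simp [aC_val, bC_val] at this

/-- The equivalence between `Fin m` and the first `m` slots of `Fin (m+2)`. -/
def eLT (m : ℕ) : Fin m ≃ {i : Fin (m+2) // (i : ℕ) < m} where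
  toFun i := ⟨⟨(i : ℕ), by omega⟩, i.isLt⟩
  invFun j := ⟨(j.1 : ℕ), j.2⟩
  left_inv i := rfl
  right_inv j := rfl

/-- Extend a permutation of `Fin m` to `Fin (m+2)` fixing the last two slots. -/
def ext2 (m : ℕ) (ρ : Equiv.Perm (Fin m)) : Equiv.Perm (Fin (m+2)) :=
  ρ.extendDomain (eLT m)

theorem ext2_apply_lt (m : ℕ) (ρ : Equiv.Perm (Fin m)) (i : Fin (m+2)) (h : (i : ℕ) < m) :
    ext2 m ρ i = ⟨(ρ ⟨(i : ℕ), h⟩ : ℕ), by omega⟩ := by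
  have h0 := Equiv.Perm.extendDomain_apply_subtype
    (p := fun j : Fin (m+2) => (j : ℕ) < m) ρ (eLT m) (b := i) h
  rw [ext2, h0]; rfl

theorem ext2_apply_ge (m : ℕ) (ρ : Equiv.Perm (Fin m)) (i : Fin (m+2)) (h : ¬ (i : ℕ) < m) :
    ext2 m ρ i = i :=
  Equiv.Perm.extendDomain_apply_not_subtype _ _ h

theorem sign_ext2 (m : ℕ) (ρ : Equiv.Perm (Fin m)) :
    Equiv.Perm.sign (ext2 m ρ) = Equiv.Perm.sign ρ :=
  Equiv.Perm.sign_extendDomain ρ _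

theorem ext2_inv (m : ℕ) (ρ : Equiv.Perm (Fin m)) : (ext2 m ρ)⁻¹ = ext2 m ρ⁻¹ :=
  Equiv.Perm.extendDomain_inv _ _

theorem ext2_injective (m : ℕ) : Function.Injective (ext2 m) := by
  intro ρ ρ' h
  apply Equiv.ext; intro i
  have h1 : ext2 m ρ ⟨(i : ℕ), by omega⟩ = ext2 m ρ' ⟨(i : ℕ), by omega⟩ := by rw [h]
  rw [ext2_apply_lt _ _ _ i.isLt, ext2_apply_lt _ _ _ i.isLt] at h1
  have h2 := congrArg Fin.val h1
  simp only at h2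
  apply Fin.ext
  simpa [Fin.eta] using h2

theorem exists_ext2 (m : ℕ) (τ : Equiv.Perm (Fin (m+2)))
    (h1 : τ (aC m) = aC m) (h2 : τ (bC m) = bC m) :
    ∃ ρ : Equiv.Perm (Fin m), τ = ext2 m ρ := by
  have key : ∀ (π : Equiv.Perm (Fin (m+2))), π (aC m) = aC m → π (bC m) = bC m →
      ∀ i : Fin (m+2), (i : ℕ) < m → ((π i : Fin (m+2)) : ℕ) < m := by
    intro π ha hb i hi
    by_contra h
    have hv : (π i : ℕ) = m ∨ (π i : ℕ) = m + 1 := by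
      have := (π i).isLt; omega
    rcases hv with hv | hv
    · have : π i = π (aC m) := by rw [ha]; exact Fin.ext (by simpa [aC_val] using hv)
      have := π.injective this
      rw [this] at hi; simp [aC_val] at hi
    · have : π i = π (bC m) := by rw [hb]; exact Fin.ext (by simpa [bC_val] using hv)
      have := π.injective this
      rw [this] at hi; simp [bC_val] at hi
  have h1' : τ⁻¹ (aC m) = aC m := τ.injective (by simp [h1])
  have h2' : τ⁻¹ (bC m) = bC m := τ.injective (by simp [h2])
  refine ⟨⟨fun i => ⟨((τ ⟨(i : ℕ), by omega⟩ : Fin (m+2)) : ℕ), key τ h1 h2 _ i.isLt⟩,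
          fun i => ⟨((τ⁻¹ ⟨(i : ℕ), by omega⟩ : Fin (m+2)) : ℕ), key τ⁻¹ h1' h2' _ i.isLt⟩,
          ?_, ?_⟩, ?_⟩
  · intro i
    apply Fin.ext
    simp [Fin.eta]
  · intro i
    apply Fin.ext
    simp [Fin.eta]
  · apply Equiv.ext; intro i
    by_cases h : (i : ℕ) < m
    · rw [ext2_apply_lt _ _ _ h]
      apply Fin.ext
      simp [Fin.eta]
    · rw [ext2_apply_ge _ _ _ h]
      have hv : (i : ℕ) = m ∨ (i : ℕ) = m + 1 := by
        have := i.isLt; omega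
      rcases hv with hv | hv
      · rw [show i = aC m from Fin.ext (by simp [aC_val, hv])]; exact h1
      · rw [show i = bC m from Fin.ext (by simp [bC_val, hv])]; exact h2

end Aux3
section Aux4
variable {k : Type*} [Field k] {X : Type*} [AddCommGroup X] [Module k X]
  {W : Type*} [AddCommGroup W] [Module k W]

theorem lapRaw_comp_ext2 (ψ : X ⊗[k] X →ₗ[k] W) (m : ℕ) (ρ : Equiv.Perm (Fin m)) :
    lapRaw ψ m ∘ₗ (permOp k X (m+2) (ext2 m ρ)).toLinearMap
      = (LinearMap.rTensor W (permOp k X m ρ).toLinearMap) ∘ₗ lapRaw ψ m := by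
  apply tensorExt; intro f
  simp only [LinearMap.coe_comp, LinearEquiv.coe_coe, Function.comp_apply, permOp_tprod,
    lapRaw_tprod, LinearMap.rTensor_tmul, permOp_tprod]
  have hsymm : (ext2 m ρ).symm = ext2 m ρ⁻¹ := by
    rw [← ext2_inv]; rfl
  rw [hsymm]
  rw [ext2_apply_ge m ρ⁻¹ ((Fin.last m).castSucc) (by simp),
      ext2_apply_ge m ρ⁻¹ (Fin.last (m+1)) (by simp)]
  congr 1
  congr 1
  funext i
  have hre : ρ.symm i = ρ⁻¹ i := rfl
  rw [hre, ext2_apply_lt m ρ⁻¹ _ (by simpa using i.isLt)]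
  congr 1

/-- The transposition of the last two slots. -/
def swLast (m : ℕ) : Equiv.Perm (Fin (m+2)) := Equiv.swap (aC m) (bC m)

theorem lapRaw_comp_swLast (ψ : X ⊗[k] X →ₗ[k] W)
    (halt : ∀ x y : X, ψ (y ⊗ₜ[k] x) = - ψ (x ⊗ₜ[k] y)) (m : ℕ) :
    lapRaw ψ m ∘ₗ (permOp k X (m+2) (swLast m)).toLinearMap = - lapRaw ψ m := by
  apply tensorExt; intro f
  simp only [LinearMap.coe_comp, LinearEquiv.coe_coe, Function.comp_apply, permOp_tprod,
    lapRaw_tprod, LinearMap.neg_apply]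
  have hsymm : (swLast m).symm = swLast m := by
    rw [swLast]; exact Equiv.symm_swap _ _
  rw [hsymm]
  have ha : swLast m (aC m) = bC m := Equiv.swap_apply_left _ _
  have hb : swLast m (bC m) = aC m := Equiv.swap_apply_right _ _
  have haC : (Fin.last m).castSucc = aC m := rfl
  have hbC : Fin.last (m+1) = bC m := rfl
  rw [haC, hbC, ha, hb]
  have hfix : (⨂ₜ[k] (i : Fin m), f ((swLast m) i.castSucc.castSucc))
      = ⨂ₜ[k] (i : Fin m), f i.castSucc.castSucc := by
    congr 1; funext i
    congr 1
    apply Equiv.swap_apply_of_ne_of_ne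
    · intro hc; have := congrArg Fin.val hc; simp [aC_val] at this; omega
    · intro hc; have := congrArg Fin.val hc; simp [bC_val] at this; omega
  rw [hfix, show (bC m : Fin (m+2)) = Fin.last (m+1) from rfl,
    show (aC m : Fin (m+2)) = (Fin.last m).castSucc from rfl]
  rw [halt, TensorProduct.tmul_neg]

theorem key_setwise (ψ : X ⊗[k] X →ₗ[k] W)
    (halt : ∀ x y : X, ψ (y ⊗ₜ[k] x) = - ψ (x ⊗ₜ[k] y)) (m : ℕ)
    (τ : Equiv.Perm (Fin (m+2)))
    (h : (τ (aC m) = aC m ∧ τ (bC m) = bC m) ∨ (τ (aC m) = bC m ∧ τ (bC m) = aC m)) :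
    (LinearMap.rTensor W (altProj k X m)) ∘ₗ lapRaw ψ m ∘ₗ (permOp k X (m+2) τ).toLinearMap
      = ((Equiv.Perm.sign τ : ℤ) : k) •
          ((LinearMap.rTensor W (altProj k X m)) ∘ₗ lapRaw ψ m) := by
  rcases h with ⟨h1, h2⟩ | ⟨h1, h2⟩
  · obtain ⟨ρ, rfl⟩ := exists_ext2 m τ h1 h2
    rw [lapRaw_comp_ext2, ← LinearMap.comp_assoc, ← LinearMap.rTensor_comp,
      altProj_comp_permOp, sign_ext2, LinearMap.rTensor_smul, LinearMap.smul_comp]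
  · have h1' : (τ * swLast m) (aC m) = aC m := by
      simp only [Equiv.Perm.mul_apply, swLast, Equiv.swap_apply_left]; exact h2
    have h2' : (τ * swLast m) (bC m) = bC m := by
      simp only [Equiv.Perm.mul_apply, swLast, Equiv.swap_apply_right]; exact h1
    obtain ⟨ρ, hρ⟩ := exists_ext2 m (τ * swLast m) h1' h2'
    have hτ' : τ = ext2 m ρ * swLast m := by
      rw [← hρ, mul_assoc, swLast, Equiv.swap_mul_self, mul_one]
    have c1 : lapRaw ψ m ∘ₗ (permOp k X (m+2) τ).toLinearMap
        = (-1 : k) • ((LinearMap.rTensor W (permOp k X m ρ).toLinearMap) ∘ₗ lapRaw ψ m) := by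
      rw [hτ', permOp_mul, ← LinearMap.comp_assoc, lapRaw_comp_ext2,
        LinearMap.comp_assoc, lapRaw_comp_swLast ψ halt m]
      ext x
      simp [neg_one_smul]
      exact (neg_one_smul _ _).symm
    rw [c1]
    have hsign : ((Equiv.Perm.sign τ : ℤ) : k) = - ((Equiv.Perm.sign ρ : ℤ) : k) := by
      rw [hτ', Equiv.Perm.sign_mul, sign_ext2, swLast, Equiv.Perm.sign_swap (aC_ne_bC m)]
      rcases Int.units_eq_one_or (Equiv.Perm.sign ρ) with h | h <;> simp [h]
    rw [hsign]
    have c2 : (LinearMap.rTensor W (altProj k X m)) ∘ₗ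
        ((LinearMap.rTensor W (permOp k X m ρ).toLinearMap) ∘ₗ lapRaw ψ m)
        = ((Equiv.Perm.sign ρ : ℤ) : k) •
            ((LinearMap.rTensor W (altProj k X m)) ∘ₗ lapRaw ψ m) := by
      rw [← LinearMap.comp_assoc, ← LinearMap.rTensor_comp, altProj_comp_permOp,
        LinearMap.rTensor_smul, LinearMap.smul_comp]
    rw [LinearMap.comp_smul, c2, smul_smul, neg_one_mul]
end Aux4
section Aux5

theorem card_fix (m : ℕ) :
    (Finset.univ.filter (fun τ : Equiv.Perm (Fin (m+2)) =>
      τ (aC m) = aC m ∧ τ (bC m) = bC m)).card = m.factorial := by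
  have hcard := Finset.card_nbij (s := (Finset.univ : Finset (Equiv.Perm (Fin m))))
    (t := Finset.univ.filter (fun τ : Equiv.Perm (Fin (m+2)) =>
      τ (aC m) = aC m ∧ τ (bC m) = bC m)) (i := ext2 m)
    (by
      intro ρ _
      rw [Finset.mem_coe, Finset.mem_filter]
      exact ⟨Finset.mem_univ _, ext2_apply_ge m ρ _ (by simp [aC_val]),
        ext2_apply_ge m ρ _ (by simp [bC_val])⟩)
    ((ext2_injective m).injOn)
    (by
      intro τ hτ
      simp only [Finset.coe_filter, Set.mem_setOf_eq, Finset.mem_univ, true_and] at hτ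
      obtain ⟨ρ, rfl⟩ := exists_ext2 m τ hτ.1 hτ.2
      exact ⟨ρ, by simp, rfl⟩)
  rw [← hcard, Finset.card_univ, Fintype.card_perm, Fintype.card_fin]

theorem card_setwise (m : ℕ) :
    (Finset.univ.filter (fun τ : Equiv.Perm (Fin (m+2)) =>
      (τ (aC m) = aC m ∧ τ (bC m) = bC m) ∨ (τ (aC m) = bC m ∧ τ (bC m) = aC m))).card
      = 2 * m.factorial := by
  rw [Finset.filter_or]
  rw [Finset.card_union_of_disjoint (by
    rw [Finset.disjoint_left]
    intro τ h1 h2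
    rw [Finset.mem_filter] at h1 h2
    exact aC_ne_bC m (h1.2.1.symm.trans h2.2.1))]
  have h2 : (Finset.univ.filter (fun τ : Equiv.Perm (Fin (m+2)) =>
      τ (aC m) = bC m ∧ τ (bC m) = aC m)).card
      = (Finset.univ.filter (fun τ : Equiv.Perm (Fin (m+2)) =>
      τ (aC m) = aC m ∧ τ (bC m) = bC m)).card := by
    apply Finset.card_nbij' (i := fun τ => τ * swLast m) (j := fun τ => τ * swLast m)
    · intro τ hτ
      rw [Finset.mem_coe, Finset.mem_filter] at hτ ⊢
      refine ⟨Finset.mem_univ _, ?_, ?_⟩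
      · show τ (swLast m (aC m)) = aC m
        rw [swLast, Equiv.swap_apply_left]; exact hτ.2.2
      · show τ (swLast m (bC m)) = bC m
        rw [swLast, Equiv.swap_apply_right]; exact hτ.2.1
    · intro τ hτ
      rw [Finset.mem_coe, Finset.mem_filter] at hτ ⊢
      refine ⟨Finset.mem_univ _, ?_, ?_⟩
      · show τ (swLast m (aC m)) = bC m
        rw [swLast, Equiv.swap_apply_left]; exact hτ.2.2
      · show τ (swLast m (bC m)) = aC m
        rw [swLast, Equiv.swap_apply_right]; exact hτ.2.1
    · intro τ _
      show τ * swLast m * swLast m = τ; rw [mul_assoc, swLast, Equiv.swap_mul_self, mul_one]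
    · intro τ _
      show τ * swLast m * swLast m = τ; rw [mul_assoc, swLast, Equiv.swap_mul_self, mul_one]
  rw [card_fix, h2, card_fix]
  ring

/-- The sorted pair of preimages of the last two slots. -/
def pairOf (m : ℕ) (σ : Equiv.Perm (Fin (m+2))) : Fin (m+2) × Fin (m+2) :=
  if σ⁻¹ (aC m) < σ⁻¹ (bC m) then (σ⁻¹ (aC m), σ⁻¹ (bC m)) else (σ⁻¹ (bC m), σ⁻¹ (aC m))

theorem pairOf_lt (m : ℕ) (σ : Equiv.Perm (Fin (m+2))) : (pairOf m σ).1 < (pairOf m σ).2 := by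
  have hne : σ⁻¹ (aC m) ≠ σ⁻¹ (bC m) := fun h => aC_ne_bC m (σ⁻¹.injective h)
  rw [pairOf]
  split_ifs with h
  · exact h
  · exact lt_of_le_of_ne (not_lt.mp h) (Ne.symm hne)

theorem pairOf_eq_iff (m : ℕ) (σ : Equiv.Perm (Fin (m+2))) (p q : Fin (m+2)) (hpq : p < q) :
    pairOf m σ = (p, q) ↔
      ((σ p = aC m ∧ σ q = bC m) ∨ (σ p = bC m ∧ σ q = aC m)) := by
  constructor
  · intro h
    rw [pairOf] at h
    split_ifs at h with hc
    · rw [Prod.mk.injEq] at h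
      left
      constructor
      · rw [← h.1]; simp
      · rw [← h.2]; simp
    · rw [Prod.mk.injEq] at h
      right
      constructor
      · rw [← h.1]; simp
      · rw [← h.2]; simp
  · intro h
    have hia : ∀ x, σ x = aC m → σ⁻¹ (aC m) = x := by
      intro x hx; rw [← hx]; simp
    have hib : ∀ x, σ x = bC m → σ⁻¹ (bC m) = x := by
      intro x hx; rw [← hx]; simp
    rcases h with ⟨h1, h2⟩ | ⟨h1, h2⟩
    · rw [pairOf, hia p h1, hib q h2, if_pos hpq]
    · rw [pairOf, hia q h2, hib p h1, if_neg (by exact fun hc => absurd hpq (not_lt.mpr (le_of_lt hc)))]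

theorem card_fiber (m : ℕ) (p q : Fin (m+2)) (hpq : p < q) (d : Equiv.Perm (Fin (m+2)))
    (hdp : d p = aC m) (hdq : d q = bC m) :
    (Finset.univ.filter (fun σ : Equiv.Perm (Fin (m+2)) => pairOf m σ = (p, q))).card
      = 2 * m.factorial := by
  rw [← card_setwise m]
  have hdia : d⁻¹ (aC m) = p := by rw [← hdp]; simp
  have hdib : d⁻¹ (bC m) = q := by rw [← hdq]; simp
  apply Finset.card_nbij' (i := fun σ => σ * d⁻¹) (j := fun τ => τ * d)
  · intro σ hσ
    rw [Finset.mem_coe, Finset.mem_filter] at hσ ⊢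
    have := (pairOf_eq_iff m σ p q hpq).mp hσ.2
    refine ⟨Finset.mem_univ _, ?_⟩
    rcases this with ⟨h1, h2⟩ | ⟨h1, h2⟩
    · left
      constructor
      · show σ (d⁻¹ (aC m)) = aC m; rw [hdia]; exact h1
      · show σ (d⁻¹ (bC m)) = bC m; rw [hdib]; exact h2
    · right
      constructor
      · show σ (d⁻¹ (aC m)) = bC m; rw [hdia]; exact h1
      · show σ (d⁻¹ (bC m)) = aC m; rw [hdib]; exact h2
  · intro τ hτ
    rw [Finset.mem_coe, Finset.mem_filter] at hτ ⊢
    refine ⟨Finset.mem_univ _, ?_⟩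
    rw [pairOf_eq_iff m _ p q hpq]
    rcases hτ.2 with ⟨h1, h2⟩ | ⟨h1, h2⟩
    · left
      constructor
      · show τ (d p) = aC m; rw [hdp]; exact h1
      · show τ (d q) = bC m; rw [hdq]; exact h2
    · right
      constructor
      · show τ (d p) = bC m; rw [hdp]; exact h1
      · show τ (d q) = aC m; rw [hdq]; exact h2
  · intro σ _; exact inv_mul_cancel_right σ d
  · intro τ _; exact mul_inv_cancel_right τ d

end Aux5
section Aux6
variable {k : Type*} [Field k] {X : Type*} [AddCommGroup X] [Module k X]
  {W : Type*} [AddCommGroup W] [Module k W]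

theorem fiber_const (ψ : X ⊗[k] X →ₗ[k] W)
    (halt : ∀ x y : X, ψ (y ⊗ₜ[k] x) = - ψ (x ⊗ₜ[k] y)) (m : ℕ)
    (p q : Fin (m+2)) (hpq : p < q) (d : Equiv.Perm (Fin (m+2)))
    (hdp : d p = aC m) (hdq : d q = bC m)
    (σ : Equiv.Perm (Fin (m+2))) (hσ : pairOf m σ = (p, q)) :
    ((Equiv.Perm.sign σ : ℤ) : k) • ((LinearMap.rTensor W (altProj k X m)) ∘ₗ lapRaw ψ m ∘ₗ
        (permOp k X (m+2) σ).toLinearMap)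
      = ((Equiv.Perm.sign d : ℤ) : k) • ((LinearMap.rTensor W (altProj k X m)) ∘ₗ lapRaw ψ m ∘ₗ
        (permOp k X (m+2) d).toLinearMap) := by
  set τ := σ * d⁻¹ with hτdef
  have hστ : σ = τ * d := by rw [hτdef, inv_mul_cancel_right]
  have hdia : d⁻¹ (aC m) = p := by rw [← hdp]; simp
  have hdib : d⁻¹ (bC m) = q := by rw [← hdq]; simp
  have hmem : (τ (aC m) = aC m ∧ τ (bC m) = bC m) ∨ (τ (aC m) = bC m ∧ τ (bC m) = aC m) := by
    rcases (pairOf_eq_iff m σ p q hpq).mp hσ with ⟨h1, h2⟩ | ⟨h1, h2⟩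
    · left
      constructor
      · show σ (d⁻¹ (aC m)) = aC m; rw [hdia]; exact h1
      · show σ (d⁻¹ (bC m)) = bC m; rw [hdib]; exact h2
    · right
      constructor
      · show σ (d⁻¹ (aC m)) = bC m; rw [hdia]; exact h1
      · show σ (d⁻¹ (bC m)) = aC m; rw [hdib]; exact h2
  have hcomp : (LinearMap.rTensor W (altProj k X m)) ∘ₗ lapRaw ψ m ∘ₗ
      (permOp k X (m+2) σ).toLinearMap
      = ((Equiv.Perm.sign τ : ℤ) : k) • ((LinearMap.rTensor W (altProj k X m)) ∘ₗ lapRaw ψ m ∘ₗ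
          (permOp k X (m+2) d).toLinearMap) := by
    rw [hστ, permOp_mul]
    apply LinearMap.ext; intro x
    have hk := LinearMap.congr_fun (key_setwise ψ halt m τ hmem)
      ((permOp k X (m+2) d).toLinearMap x)
    simp only [LinearMap.coe_comp, Function.comp_apply, LinearMap.smul_apply] at hk ⊢
    exact hk
  rw [hcomp, smul_smul]
  congr 1
  have h0 : Equiv.Perm.sign τ = Equiv.Perm.sign σ * Equiv.Perm.sign d := by
    rw [hτdef, Equiv.Perm.sign_mul, Equiv.Perm.sign_inv]
  rcases Int.units_eq_one_or (Equiv.Perm.sign σ) with h1 | h1 <;>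
    rcases Int.units_eq_one_or (Equiv.Perm.sign d) with h2 | h2 <;>
      simp [h0, h1, h2]

end Aux6
/-- Lemma "Dirac L1" (alternating case) for vector spaces: let `ψ : X ⊗ X → k` be an
alternating bilinear form on a vector space over a field `k` of characteristic `0`.
For `n ≥ 2` (here at level `n+2`), the Laplace operator
`Δ_{ψ,a}^{n+2} : ∧^{n+2} X → ∧^n X ⊗ k` satisfies
`Δ_{ψ,a}^{n+2} ∘ p^{n+2} = p^n ∘ (2/((n+2)(n+1))) ∑_{p<q} ε(δ_{p,q})⁻¹ (1 ⊗ ψ) ∘ δ_{p,q}`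
as maps `X^{⊗(n+2)} → ∧^n X ⊗ k`, where `p^m` are the canonical projections, `ε` is the
sign character, and `δ_{p,q}` is any permutation sending `p, q` to the last two slots. -/
theorem laplace_alt_eq_averaged_sum
    {k : Type*} [Field k] [CharZero k] {X : Type*} [AddCommGroup X] [Module k X]
    (ψ : X ⊗[k] X →ₗ[k] k)
    (halt : ∀ x y : X, ψ (y ⊗ₜ[k] x) = - ψ (x ⊗ₜ[k] y))
    (n : ℕ)
    (δ : Fin (n+2) → Fin (n+2) → Equiv.Perm (Fin (n+2)))
    (hδ : ∀ p q : Fin (n+2), p ≠ q →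
      δ p q p = ⟨n, by omega⟩ ∧ δ p q q = ⟨n+1, by omega⟩) :
    lapA ψ n ∘ₗ altProj k X (n+2)
      = (2 / (((n : k) + 2) * ((n : k) + 1))) •
          ∑ x ∈ Finset.univ.filter (fun x : Fin (n+2) × Fin (n+2) => x.1 < x.2),
            ((((Equiv.Perm.sign (δ x.1 x.2))⁻¹ : ℤˣ) : ℤ) : k) •
              ((LinearMap.rTensor k (altProj k X n)) ∘ₗ (lapRaw ψ n) ∘ₗ
                (permOp k X (n+2) (δ x.1 x.2)).toLinearMap) := by
  have hL : lapA ψ n ∘ₗ altProj k X (n+2)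
      = (LinearMap.rTensor k (altProj k X n)) ∘ₗ lapRaw ψ n ∘ₗ altIdem k X (n+2) := by
    apply LinearMap.ext; intro x
    simp only [lapA, LinearMap.coe_comp, Function.comp_apply]
    rfl
  have hsum : (LinearMap.rTensor k (altProj k X n)) ∘ₗ lapRaw ψ n ∘ₗ altIdem k X (n+2)
      = ((Nat.factorial (n+2) : k))⁻¹ •
          ∑ σ : Equiv.Perm (Fin (n+2)), ((Equiv.Perm.sign σ : ℤ) : k) •
            ((LinearMap.rTensor k (altProj k X n)) ∘ₗ lapRaw ψ n ∘ₗ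
              (permOp k X (n+2) σ).toLinearMap) := by
    apply LinearMap.ext; intro x
    simp only [altIdem, LinearMap.coe_comp, Function.comp_apply, LinearMap.smul_apply,
      LinearMap.sum_apply, map_smul, map_sum]
  rw [hL, hsum]
  have hmaps : ∀ σ : Equiv.Perm (Fin (n+2)), σ ∈ Finset.univ → pairOf n σ ∈
      Finset.univ.filter (fun x : Fin (n+2) × Fin (n+2) => x.1 < x.2) := by
    intro σ _; rw [Finset.mem_filter]; exact ⟨Finset.mem_univ _, pairOf_lt n σ⟩
  rw [← Finset.sum_fiberwise_of_maps_to hmaps (fun σ => ((Equiv.Perm.sign σ : ℤ) : k) •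
    ((LinearMap.rTensor k (altProj k X n)) ∘ₗ lapRaw ψ n ∘ₗ
      (permOp k X (n+2) σ).toLinearMap))]
  have hstep : ∀ y ∈ Finset.univ.filter (fun x : Fin (n+2) × Fin (n+2) => x.1 < x.2),
      ∑ σ ∈ Finset.univ.filter (fun σ : Equiv.Perm (Fin (n+2)) => pairOf n σ = y),
        ((Equiv.Perm.sign σ : ℤ) : k) •
          ((LinearMap.rTensor k (altProj k X n)) ∘ₗ lapRaw ψ n ∘ₗ
            (permOp k X (n+2) σ).toLinearMap)
      = (2 * n.factorial) • (((Equiv.Perm.sign (δ y.1 y.2) : ℤ) : k) •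
          ((LinearMap.rTensor k (altProj k X n)) ∘ₗ lapRaw ψ n ∘ₗ
            (permOp k X (n+2) (δ y.1 y.2)).toLinearMap)) := by
    intro y hy
    rw [Finset.mem_filter] at hy
    have hpq : y.1 < y.2 := hy.2
    obtain ⟨hdp, hdq⟩ := hδ y.1 y.2 (ne_of_lt hpq)
    have hdp' : δ y.1 y.2 y.1 = aC n := by rw [hdp]; rfl
    have hdq' : δ y.1 y.2 y.2 = bC n := by rw [hdq]; rfl
    have hconst : ∀ σ ∈ Finset.univ.filter
        (fun σ : Equiv.Perm (Fin (n+2)) => pairOf n σ = y),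
        ((Equiv.Perm.sign σ : ℤ) : k) •
          ((LinearMap.rTensor k (altProj k X n)) ∘ₗ lapRaw ψ n ∘ₗ
            (permOp k X (n+2) σ).toLinearMap)
        = ((Equiv.Perm.sign (δ y.1 y.2) : ℤ) : k) •
          ((LinearMap.rTensor k (altProj k X n)) ∘ₗ lapRaw ψ n ∘ₗ
            (permOp k X (n+2) (δ y.1 y.2)).toLinearMap) := by
      intro σ hσ
      rw [Finset.mem_filter] at hσ
      exact fiber_const ψ halt n y.1 y.2 hpq (δ y.1 y.2) hdp' hdq' σ hσ.2
    rw [Finset.sum_congr rfl hconst, Finset.sum_const]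
    have hcard := card_fiber n y.1 y.2 hpq (δ y.1 y.2) hdp' hdq'
    simp only [Prod.mk.eta] at hcard
    rw [hcard]
  rw [Finset.sum_congr rfl hstep]
  have hinv : ∀ (u : ℤˣ), (((u⁻¹ : ℤˣ) : ℤ) : k) = ((u : ℤ) : k) := by
    intro u; rcases Int.units_eq_one_or u with h | h <;> simp [h]
  simp only [hinv]
  simp only [← Nat.cast_smul_eq_nsmul k]
  rw [← Finset.smul_sum, smul_smul]
  congr 1
  have h2 : ((n : k) + 2) ≠ 0 := by
    have h := Nat.cast_ne_zero (R := k) |>.mpr (show n + 2 ≠ 0 by omega)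
    push_cast at h
    exact h
  have h3 : ((n : k) + 1) ≠ 0 := by
    have h := Nat.cast_ne_zero (R := k) |>.mpr (show n + 1 ≠ 0 by omega)
    push_cast at h
    exact h
  have h1 : ((n.factorial : ℕ) : k) ≠ 0 := Nat.cast_ne_zero.mpr n.factorial_ne_zero
  have hfac : ((Nat.factorial (n+2) : ℕ) : k)
      = ((n : k) + 2) * ((n : k) + 1) * (n.factorial : k) := by
    rw [show n + 2 = (n+1) + 1 from rfl, Nat.factorial_succ, Nat.factorial_succ]
    push_cast
    ring
  rw [hfac]
  push_cast
  field_simp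

end
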